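/- In PowerSeries ℚ, let C be the Catalan generating function, characterized by C = 1 + X*C^2 with constant coefficient 1, and set D = subst (-X^3) C (the series c(-x^3)). Let g = 1 + X^3, f1 = X*(1 + X^3), f2 = X*(1 - X^3)⁻¹, f3 = X*(1 - X^3), and let h be a power series supported on residue 1 mod 3 with h^3 = X^3*(1 + X^3) = f1*f2*f3. Let G = D, F1 = X*D, F2 = X*(1 - X^3*D), F3 = X*(1 - X^3*D)⁻¹. Then g * subst h G = 1 and fᵢ * subst h Fᵢ = X*h for i = 1,2,3; that is, (c(-x^3), x c(-x^3), x(1 - x^3 c(-x^3)), x/(1 - x^3 c(-x^3))) is the inverse of (g, f1, f2, f3) in the triple Riordan group. -/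

import Mathlib

open PowerSeries Finset

/-- Substitution of the power series `h` (with zero constant coefficient) into `F`. -/
noncomputable def subst (h F : PowerSeries ℚ) : PowerSeries ℚ :=
  PowerSeries.mk fun n => ∑ k ∈ range (n + 1), coeff k F * coeff n (h ^ k)

/-!
Substituting `h` is a ring homomorphism, so `E := c(-h³) = c(-x³(1 + x³))` satisfies
`E = 1 - x³(1 + x³)E²`. Writing `u = (1 + x³)E`, this reads `(u - 1)(x³u + 1 + x³) = 0`, and the
second factor is a unit, so `E = 1/(1 + x³)`. Hence `h³E = x³`, so `1 - h³E` becomes `1 - x³`,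
which cancels against `f₂` and `f₃`.
-/

lemma PowerSeries.coeff_pow_eq_zero_of_lt {R : Type*} [Semiring R] {h : R⟦X⟧}
    (hh : constantCoeff h = 0) {n k : ℕ} (hnk : n < k) : coeff n (h ^ k) = 0 :=
  coeff_of_lt_order n <| (Nat.cast_lt.mpr hnk).trans_le (le_order_pow_of_constantCoeff_eq_zero k hh)

lemma subst_eq_substAlgHom {h : ℚ⟦X⟧} (hh : constantCoeff h = 0) (F : ℚ⟦X⟧) :
    _root_.subst h F = substAlgHom (HasSubst.of_constantCoeff_zero' hh) F := by
  ext n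
  rw [coe_substAlgHom, coeff_subst' (HasSubst.of_constantCoeff_zero' hh), _root_.subst, coeff_mk,
    finsum_eq_sum_of_support_subset (s := range (n + 1))]
  · simp only [smul_eq_mul]
  intro k hk
  rw [Function.mem_support] at hk
  rw [Finset.coe_range, Set.mem_Iio]
  by_contra hkn
  exact hk (by rw [coeff_pow_eq_zero_of_lt hh (by omega), smul_zero])

lemma PowerSeries.map_inv_of_constantCoeff_ne_zero {k F : Type*} [Field k] [FunLike F k⟦X⟧ k⟦X⟧]
    [RingHomClass F k⟦X⟧ k⟦X⟧] (φ : F) {a : k⟦X⟧} (ha : constantCoeff a ≠ 0) :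
    φ a⁻¹ = (φ a)⁻¹ := by
  have hmul : φ a⁻¹ * φ a = 1 := by rw [← map_mul, PowerSeries.inv_mul_cancel a ha, map_one]
  refine (eq_inv_iff_mul_eq_one ?_).mpr hmul
  exact isUnit_iff_constantCoeff.mp (IsUnit.of_mul_eq_one_right _ hmul) |>.ne_zero

lemma PowerSeries.one_add_mul_eq_one_of_eq_one_sub_mul_sq {R : Type*} [CommRing R]
    {t E : R⟦X⟧} (ht : constantCoeff t = 0) (hE : E = 1 - t * (1 + t) * E ^ 2) :
    (1 + t) * E = 1 := by
  have hfactor : ((1 + t) * E - 1) * (t * ((1 + t) * E) + 1 + t) = 0 := by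
    linear_combination (1 + t) * hE
  have hunit : IsUnit (t * ((1 + t) * E) + 1 + t) :=
    isUnit_iff_constantCoeff.mpr (by simp [ht])
  exact sub_eq_zero.mp (hunit.mul_left_eq_zero.mp hfactor)

theorem example2_inverse_general
    (C : PowerSeries ℚ)
    (hC : C = 1 + X * C ^ 2)
    (h : PowerSeries ℚ)
    (hh3 : h ^ 3 = X ^ 3 * (1 + X ^ 3)) :
    ((1 + X ^ 3 : PowerSeries ℚ)) * _root_.subst h (_root_.subst (-X ^ 3) C) = 1 ∧
      (X * (1 + X ^ 3) : PowerSeries ℚ) * _root_.subst h (X * _root_.subst (-X ^ 3) C) = X * h ∧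
      (X * (1 - X ^ 3)⁻¹ : PowerSeries ℚ) *
          _root_.subst h (X * (1 - X ^ 3 * _root_.subst (-X ^ 3) C)) = X * h ∧
      (X * (1 - X ^ 3) : PowerSeries ℚ) *
          _root_.subst h (X * (1 - X ^ 3 * _root_.subst (-X ^ 3) C)⁻¹) = X * h := by
  have hh0 : constantCoeff h = 0 :=
    pow_eq_zero_iff three_ne_zero |>.mp (by simpa using congrArg constantCoeff hh3)
  have hX3 : constantCoeff (-X ^ 3 : ℚ⟦X⟧) = 0 := by simp
  simp only [subst_eq_substAlgHom hh0, subst_eq_substAlgHom hX3]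
  set φ : ℚ⟦X⟧ →ₐ[ℚ] ℚ⟦X⟧ := substAlgHom (HasSubst.of_constantCoeff_zero' hh0)
  have hφX : φ X = h := substAlgHom_X _
  set D : ℚ⟦X⟧ := substAlgHom (HasSubst.of_constantCoeff_zero' hX3) C
  have hD : D = 1 - X ^ 3 * D ^ 2 := by
    have := congrArg (substAlgHom (HasSubst.of_constantCoeff_zero' hX3)) hC
    simp only [map_add, map_one, map_mul, map_pow, substAlgHom_X] at this
    linear_combination this
  have hE : (1 + X ^ 3) * φ D = 1 := by
    refine one_add_mul_eq_one_of_eq_one_sub_mul_sq (by simp) ?_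
    conv_lhs => rw [hD]
    simp only [map_sub, map_one, map_mul, map_pow, hφX]
    linear_combination -(φ D) ^ 2 * hh3
  have hh3E : h ^ 3 * φ D = X ^ 3 := by linear_combination φ D * hh3 + X ^ 3 * hE
  have hA : φ (1 - X ^ 3 * D) = 1 - X ^ 3 := by
    rw [map_sub, map_one, map_mul, map_pow, hφX, hh3E]
  have hA0 : constantCoeff (1 - X ^ 3 : ℚ⟦X⟧) ≠ 0 := by simp
  refine ⟨hE, ?_, ?_, ?_⟩
  · rw [map_mul, hφX]
    linear_combination X * h * hE
  · rw [map_mul, hφX, hA]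
    linear_combination X * h * PowerSeries.inv_mul_cancel _ hA0
  · rw [map_mul, hφX, map_inv_of_constantCoeff_ne_zero _ (by simp), hA]
    linear_combination X * h * PowerSeries.mul_inv_cancel _ hA0

theorem example2_inverse
    (C : PowerSeries ℚ)
    (hC : C = 1 + X * C ^ 2) (hC0 : coeff 0 C = 1)
    (h : PowerSeries ℚ)
    (hsupp : ∀ n : ℕ, n % 3 ≠ 1 → coeff n h = 0)
    (hh3 : h ^ 3 = X ^ 3 * (1 + X ^ 3)) :
    ((1 + X ^ 3 : PowerSeries ℚ)) * _root_.subst h (_root_.subst (-X ^ 3) C) = 1 ∧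
      (X * (1 + X ^ 3) : PowerSeries ℚ) * _root_.subst h (X * _root_.subst (-X ^ 3) C) = X * h ∧
      (X * (1 - X ^ 3)⁻¹ : PowerSeries ℚ) *
          _root_.subst h (X * (1 - X ^ 3 * _root_.subst (-X ^ 3) C)) = X * h ∧
      (X * (1 - X ^ 3) : PowerSeries ℚ) *
          _root_.subst h (X * (1 - X ^ 3 * _root_.subst (-X ^ 3) C)⁻¹) = X * h :=
  example2_inverse_general C hC h hh3
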